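/- arXiv:2102.08679 — 4 statements merged into one kernel-verified Lean document; each statement's English description precedes it below -/
import Mathlib

section
/- Let d ≥ 1 be a natural number and let G be a simple graph on n ≥ 3 vertices with average degree at most d (i.e. 2·e(G) ≤ d·n). Let k be a natural number with (k + d + 5)·(4d + 6) ≤ n. If H is any simple graph on n vertices that shares at least n − k common cards with G, then G and H have the same number of edges: e(G) = e(H). -/
open SimpleGraph

/-- The degree of a vertex, as the cardinality of its neighbour set. -/
noncomputable def gdeg {V : Type} (G : SimpleGraph V) (v : V) : ℕ :=
  (G.neighborSet v).ncard

/-- The number of edges of a graph. -/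
noncomputable def ecount {V : Type} (G : SimpleGraph V) : ℕ :=
  G.edgeSet.ncard

/-- The card `G - v`: the induced subgraph on the complement of `v`. -/
def gcard {V : Type} (G : SimpleGraph V) (v : V) : SimpleGraph {w : V // w ≠ v} :=
  G.induce {w : V | w ≠ v}

/-- The number of vertices of degree exactly `t`. -/
noncomputable def dcount {V : Type} (G : SimpleGraph V) (t : ℕ) : ℕ :=
  {v : V | gdeg G v = t}.ncard

/-- `G` and `H` share at least `m` common cards: there are `m` vertices of `G`,
injectively matched with vertices of `H`, whose cards are pairwise isomorphic. -/
def SharesCards {n : ℕ} (G H : SimpleGraph (Fin n)) (m : ℕ) : Prop :=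
  ∃ (S : Finset (Fin n)) (f : Fin n → Fin n),
    m ≤ S.card ∧ Set.InjOn f ↑S ∧
    ∀ v ∈ S, Nonempty (gcard G v ≃g gcard H (f v))

/-!
Deleting `v` from `G` removes `deg v` edges, so matched cards `G - v ≅ H - f v` force
`deg_H (f v) = deg_G v + m` with `m = e(H) - e(G)`. Suppose `m > 0` and compare the degree sums
`s_t` truncated at `t = 2d + 2 + m`. A card determines `s_t` of its graph up to the degree of the
deleted vertex, so averaging over the `|S| ≥ n - k` shared cards bounds `s_t(H) - s_t(G)` by
`m + 2e(H)/|S| ≤ 3m + 2d`. On the other hand, each shared vertex of degree at most `2d + 2` in `G`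
gains the full `m` in the truncated sum, while the missing cards cost at most `k t`; by Markov's
inequality there are at least `2(d+3)(k+d+5) - k` such vertices, so `s_t(H) - s_t(G)` is too large.
Sharing cards is symmetric, which gives the reverse inequality.
-/

open Finset

instance {V : Type} (G : SimpleGraph V) [DecidableRel G.Adj] (v : V) :
    DecidableRel (gcard G v).Adj :=
  inferInstanceAs (DecidableRel (G.induce _).Adj)

lemma sum_comp_le_sum_univ {V W : Type} [Fintype W] [DecidableEq W] {S : Finset V} {f : V → W}
    (hf : Set.InjOn f S) (g : W → ℕ) : ∑ v ∈ S, g (f v) ≤ ∑ w, g w := by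
  rw [← sum_image hf]
  exact sum_le_sum_of_subset (subset_univ _)

noncomputable def truncDegreeSum {V : Type} [Fintype V] (G : SimpleGraph V) [DecidableRel G.Adj]
    (t : ℕ) : ℕ :=
  ∑ v, min (G.degree v) t

lemma ecount_eq_card_edgeFinset {V : Type} (G : SimpleGraph V) [Fintype G.edgeSet] :
    ecount G = #G.edgeFinset :=
  Set.ncard_eq_toFinset_card' _

lemma SimpleGraph.Iso.ecount_eq {V W : Type} {G : SimpleGraph V} {H : SimpleGraph W}
    (φ : G ≃g H) : ecount G = ecount H := by
  rw [ecount, ecount, ← Nat.card_coe_set_eq, ← Nat.card_coe_set_eq]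
  exact Nat.card_congr φ.mapEdgeSet

lemma SimpleGraph.Iso.truncDegreeSum_eq {V W : Type} [Fintype V] [Fintype W]
    {G : SimpleGraph V} {H : SimpleGraph W} [DecidableRel G.Adj] [DecidableRel H.Adj]
    (φ : G ≃g H) (t : ℕ) : truncDegreeSum G t = truncDegreeSum H t := by
  rw [truncDegreeSum, truncDegreeSum, ← Equiv.sum_comp φ.toEquiv]
  simp

section

variable {V : Type} [Fintype V] [DecidableEq V] (G : SimpleGraph V) [DecidableRel G.Adj] (v : V)

lemma degree_gcard_add_ite (u : {w // w ≠ v}) :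
    (gcard G v).degree u + (if G.Adj v u then 1 else 0) = G.degree u := by
  rw [← card_neighborFinset_eq_degree, ← card_neighborFinset_eq_degree,
    ← card_map (.subtype _)]
  erw [map_neighborFinset_induce (s := {v}ᶜ)]
  rw [Set.toFinset_compl, Set.toFinset_singleton, ← sdiff_eq_inter_compl,
    sdiff_singleton_eq_erase]
  split_ifs with hadj
  · exact card_erase_add_one ((G.mem_neighborFinset _ _).2 hadj.symm)
  · rw [erase_eq_of_notMem fun h ↦ hadj ((G.mem_neighborFinset _ _).1 h).symm, add_zero]

lemma ecount_gcard_add_degree : ecount (gcard G v) + G.degree v = ecount G := by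
  rw [ecount_eq_card_edgeFinset, ecount_eq_card_edgeFinset]
  erw [card_edgeFinset_induce_compl_singleton]
  rw [card_edgeFinset_deleteIncidenceSet, ← card_incidenceFinset_eq_degree]
  exact Nat.sub_add_cancel (card_le_card (G.incidenceFinset_subset v))

lemma truncDegreeSum_gcard_add (t : ℕ) :
    truncDegreeSum (gcard G v) t + #{u | G.Adj v u ∧ G.degree u ≤ t} + min (G.degree v) t =
      truncDegreeSum G t := by
  have hpt : ∀ u : {w // w ≠ v}, min ((gcard G v).degree u) t
      + (if G.Adj v u ∧ G.degree u ≤ t then 1 else 0) = min (G.degree u) t := fun u ↦ by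
    have := degree_gcard_add_ite G v u
    by_cases hadj : G.Adj v u <;> by_cases hle : G.degree u ≤ t <;>
      simp only [hadj, hle, and_self, and_true, and_false, if_true, if_false] at this ⊢ <;> omega
  rw [truncDegreeSum, truncDegreeSum, Fintype.sum_eq_add_sum_subtype_ne _ v, card_filter,
    Fintype.sum_eq_add_sum_subtype_ne _ v, ← Fintype.sum_congr _ _ hpt, sum_add_distrib]
  simp only [ne_eq, SimpleGraph.irrefl, false_and, ↓reduceIte, sum_boole, Nat.cast_id, zero_add]
  omega

end

section

variable {V W : Type} [Fintype V] [DecidableEq V] [Fintype W] [DecidableEq W]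
  {G : SimpleGraph V} {H : SimpleGraph W} [DecidableRel G.Adj] [DecidableRel H.Adj] {v : V} {w : W}

lemma degree_add_ecount_of_gcard_iso (φ : gcard G v ≃g gcard H w) :
    G.degree v + ecount H = H.degree w + ecount G := by
  have := φ.ecount_eq
  have := ecount_gcard_add_degree G v
  have := ecount_gcard_add_degree H w
  omega

lemma truncDegreeSum_le_of_gcard_iso (φ : gcard G v ≃g gcard H w) (t : ℕ) :
    truncDegreeSum H t + min (G.degree v) t ≤
      truncDegreeSum G t + H.degree w + min (H.degree w) t := by
  have hG := truncDegreeSum_gcard_add G v t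
  have hH := truncDegreeSum_gcard_add H w t
  have hcount : #{u | H.Adj w u ∧ H.degree u ≤ t} ≤ H.degree w := by
    rw [← card_neighborFinset_eq_degree, neighborFinset_eq_filter]
    exact card_le_card fun u hu ↦ by simp only [mem_filter] at hu ⊢; exact ⟨hu.1, hu.2.1⟩
  rw [φ.truncDegreeSum_eq] at hG
  omega

variable {S : Finset V} {f : V → W} {m : ℕ}

lemma card_mul_truncDegreeSum_le (hf : Set.InjOn f S)
    (hiso : ∀ v ∈ S, Nonempty (gcard G v ≃g gcard H (f v)))
    (hshift : ∀ v ∈ S, H.degree (f v) = G.degree v + m) (t : ℕ) :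
    #S * truncDegreeSum H t ≤ #S * truncDegreeSum G t + 2 * ecount H + #S * m := by
  have hv : ∀ v ∈ S, truncDegreeSum H t ≤ truncDegreeSum G t + H.degree (f v) + m := by
    intro v hv
    obtain ⟨φ⟩ := hiso v hv
    have := truncDegreeSum_le_of_gcard_iso φ t
    rw [hshift v hv] at this ⊢
    omega
  calc #S * truncDegreeSum H t = ∑ v ∈ S, truncDegreeSum H t := by simp
    _ ≤ ∑ v ∈ S, (truncDegreeSum G t + H.degree (f v) + m) := sum_le_sum hv
    _ = #S * truncDegreeSum G t + ∑ v ∈ S, H.degree (f v) + #S * m := by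
      simp [sum_add_distrib]
    _ ≤ _ := by
      grw [sum_comp_le_sum_univ hf (H.degree ·), sum_degrees_eq_twice_card_edges,
        ecount_eq_card_edgeFinset]

lemma truncDegreeSum_add_mul_card_le (hf : Set.InjOn f S)
    (hshift : ∀ v ∈ S, H.degree (f v) = G.degree v + m) {r t : ℕ} (hrt : r + m ≤ t) :
    truncDegreeSum G t + m * #{v ∈ S | G.degree v ≤ r} ≤
      truncDegreeSum H t + (Fintype.card V - #S) * t := by
  have hv : ∀ v ∈ S, min (G.degree v) t + (if G.degree v ≤ r then m else 0) ≤
      min (H.degree (f v)) t := by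
    intro v hv
    rw [hshift v hv]
    split_ifs <;> omega
  have hout : ∑ v ∈ univ \ S, min (G.degree v) t ≤ (Fintype.card V - #S) * t := by
    grw [sum_le_card_nsmul _ _ t fun v _ ↦ min_le_right _ t, card_univ_sdiff, smul_eq_mul]
  calc truncDegreeSum G t + m * #{v ∈ S | G.degree v ≤ r}
      = ∑ v ∈ univ \ S, min (G.degree v) t
          + ∑ v ∈ S, (min (G.degree v) t + if G.degree v ≤ r then m else 0) := by
        rw [truncDegreeSum, ← sum_sdiff (subset_univ S), sum_add_distrib, sum_ite, sum_const_zero,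
          sum_const, smul_eq_mul]
        ring
    _ ≤ (Fintype.card V - #S) * t + ∑ v ∈ S, min (H.degree (f v)) t :=
        add_le_add hout (sum_le_sum hv)
    _ ≤ (Fintype.card V - #S) * t + truncDegreeSum H t := by
        grw [sum_comp_le_sum_univ hf fun w ↦ min (H.degree w) t]
        rfl
    _ = _ := add_comm _ _

end

lemma mul_card_lt_degree_le {V : Type} [Fintype V] (G : SimpleGraph V) [DecidableRel G.Adj]
    (r : ℕ) : (r + 1) * #{v | r < G.degree v} ≤ 2 * ecount G := by
  calc (r + 1) * #{v | r < G.degree v} = #{v | r < G.degree v} • (r + 1) := by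
        rw [smul_eq_mul, mul_comm]
    _ ≤ ∑ v ∈ {v | r < G.degree v}, G.degree v := card_nsmul_le_sum _ _ _ fun v hv ↦ by
        simpa using hv
    _ ≤ ∑ v, G.degree v := sum_le_sum_of_subset (subset_univ _)
    _ = 2 * ecount G := by rw [sum_degrees_eq_twice_card_edges, ecount_eq_card_edgeFinset]

lemma mul_card_le_mul_card_low_degree {V : Type} [Fintype V] {G : SimpleGraph V}
    [DecidableRel G.Adj] {d : ℕ} (havg : 2 * ecount G ≤ d * Fintype.card V) (S : Finset V) :
    (d + 3) * Fintype.card V ≤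
      (2 * d + 3) * (#{v ∈ S | G.degree v ≤ 2 * d + 2} + (Fintype.card V - #S)) := by
  have hmarkov := mul_card_lt_degree_le G (2 * d + 2)
  have hS : #S ≤ #{v ∈ S | G.degree v ≤ 2 * d + 2} + #{v | 2 * d + 2 < G.degree v} := by
    rw [← card_filter_add_card_filter_not (s := S) (fun v ↦ G.degree v ≤ 2 * d + 2)]
    simp only [not_le]
    gcongr
    exact subset_univ S
  have := Nat.mul_le_mul_left (2 * d + 3) hS
  have := Nat.mul_le_mul_left (2 * d + 3)
    (show Fintype.card V ≤ #S + (Fintype.card V - #S) by omega)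
  nlinarith

lemma SharesCards.symm {n m : ℕ} {G H : SimpleGraph (Fin n)} (h : SharesCards G H m) :
    SharesCards H G m := by
  obtain ⟨S, f, hm, hf, hiso⟩ := h
  rcases S.eq_empty_or_nonempty with rfl | ⟨v₀, -⟩
  · exact ⟨∅, id, hm, by simp, by simp⟩
  have : Nonempty (Fin n) := ⟨v₀⟩
  have hinv := hf.bijOn_image.invOn_invFunOn
  refine ⟨S.image f, Function.invFunOn f S, by rwa [card_image_of_injOn hf], ?_, ?_⟩
  · rw [coe_image]
    exact (hf.bijOn_image.symm hinv.symm).injOn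
  · intro w hw
    obtain ⟨v, hv, rfl⟩ := mem_image.1 hw
    obtain ⟨φ⟩ := hiso _ (Function.invFunOn_mem ⟨v, hv, rfl⟩)
    rw [hinv.2 (Set.mem_image_of_mem f hv)] at φ
    exact ⟨φ.symm⟩

theorem ecount_le_of_sharesCards {n d k : ℕ} {G H : SimpleGraph (Fin n)}
    (havg : 2 * ecount G ≤ d * n) (hk : (k + d + 5) * (4 * d + 6) ≤ n)
    (hshare : SharesCards G H (n - k)) : ecount H ≤ ecount G := by
  classical
  obtain ⟨S, f, hS, hf, hiso⟩ := hshare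
  by_contra! hlt
  obtain ⟨m, hm, hmH⟩ : ∃ m, 0 < m ∧ ecount H = ecount G + m :=
    ⟨_, Nat.sub_pos_of_lt hlt, by omega⟩
  have hshift : ∀ v ∈ S, H.degree (f v) = G.degree v + m := fun v hv ↦ by
    obtain ⟨φ⟩ := hiso v hv
    have := degree_add_ecount_of_gcard_iso φ
    omega
  set t := 2 * d + 2 + m with ht
  have hupper := card_mul_truncDegreeSum_le hf hiso hshift t
  have hlower := truncDegreeSum_add_mul_card_le hf hshift (r := 2 * d + 2) (t := t) le_rfl
  have hlow := mul_card_le_mul_card_low_degree (by rwa [Fintype.card_fin]) S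
  rw [Fintype.card_fin] at hlower hlow
  set L := #{v ∈ S | G.degree v ≤ 2 * d + 2}
  have hnSk : n ≤ #S + k := by omega
  have hmL : m * L ≤ 2 * d + 3 * m + k * t := by
    have hS0 : 0 < #S := by nlinarith
    have : #S * (m * L) ≤ #S * (2 * d + 3 * m + k * t) := by
      have := Nat.mul_le_mul_left #S hlower
      have := Nat.mul_le_mul_left (#S * t) (show n - #S ≤ k by omega)
      have := Nat.mul_le_mul_left d (show n ≤ 2 * #S by nlinarith)
      have := Nat.mul_le_mul_right m hS0
      nlinarith
    exact Nat.le_of_mul_le_mul_left this hS0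
  have hL : 2 * (d + 3) * (k + d + 5) ≤ L + k := by
    have := Nat.mul_le_mul_left (2 * d + 3) (show n - #S ≤ k by omega)
    have := Nat.mul_le_mul_left (d + 3) hk
    refine Nat.le_of_mul_le_mul_left (?_ : (2 * d + 3) * _ ≤ (2 * d + 3) * _) (by omega)
    nlinarith
  have := Nat.mul_le_mul_left m hL
  have := Nat.mul_le_mul_left (d * k) hm
  have := Nat.mul_le_mul_left d hm
  have := Nat.mul_le_mul_left k hm
  nlinarith

theorem edge_count_reconstruction_general {n d k : ℕ}
    (G H : SimpleGraph (Fin n))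
    (havg : 2 * ecount G ≤ d * n)
    (hk : (k + d + 5) * (4 * d + 6) ≤ n)
    (hshare : SharesCards G H (n - k)) :
    ecount G = ecount H := by
  have hHG := ecount_le_of_sharesCards havg hk hshare
  exact le_antisymm (ecount_le_of_sharesCards (by omega) hk hshare.symm) hHG

/-- The number of edges of a graph with average degree at most `d` can be
reconstructed from any deck missing at most `n/(4d+6) - d - 5` cards. -/
theorem edge_count_reconstruction {n d k : ℕ} (hd : 1 ≤ d) (hn : 3 ≤ n)
    (G H : SimpleGraph (Fin n))
    (havg : 2 * ecount G ≤ d * n)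
    (hk : (k + d + 5) * (4 * d + 6) ≤ n)
    (hshare : SharesCards G H (n - k)) :
    ecount G = ecount H :=
  edge_count_reconstruction_general G H havg hk hshare
end

section
/- Let G be a simple graph on n vertices and let t be a natural number with t ≤ n − 1. Then the total number of occurrences of degree-t vertices across all n cards of G satisfies Σ_{v ∈ V(G)} d_t(G − v) = (n − 1 − t)·d_t(G) + (t + 1)·d_{t+1}(G). -/
/-!
Double counting over pairs `(v, w)` with `w ≠ v` and `deg_{G - v} w = t`. Deleting `v` lowers the
degree of `w` by one exactly when `v` is a neighbour of `w`. So a vertex `w` of degree `t` keeps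
degree `t` in the `n - 1 - t` cards `G - v` with `v` a non-neighbour of `w`, a vertex of degree
`t + 1` drops to `t` in its `t + 1` cards `G - v` with `v` a neighbour, and no other vertex ever has
degree `t` in a card.
-/

open SimpleGraph

open Finset

section
variable {V : Type} (G : SimpleGraph V)

lemma gdeg_eq_degree [Fintype V] [DecidableRel G.Adj] (v : V) : gdeg G v = G.degree v := by
  rw [gdeg, Set.ncard_eq_toFinset_card', ← card_neighborSet_eq_degree, Set.toFinset_card]

lemma dcount_eq_card_filter [Fintype V] (t : ℕ) : dcount G t = #{v | gdeg G v = t} := by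
  rw [dcount, ← Set.ncard_coe_finset, coe_filter_univ]

lemma gdeg_gcard (v : V) (w : {w : V // w ≠ v}) :
    gdeg (gcard G v) w = (G.neighborSet w \ {v}).ncard := by
  rw [gdeg, ← Set.ncard_image_of_injective _ Subtype.val_injective]
  congr 1
  ext u
  simp only [Set.mem_image, mem_neighborSet, gcard, comap_adj, Function.Embedding.coe_subtype,
    Set.mem_sdiff, Set.mem_singleton_iff]
  exact ⟨fun ⟨x, hx, hxu⟩ => hxu ▸ ⟨hx, x.2⟩, fun ⟨hu, huv⟩ => ⟨⟨u, huv⟩, hu, rfl⟩⟩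

lemma dcount_gcard [Fintype V] [DecidableEq V] (v : V) (t : ℕ) :
    dcount (gcard G v) t = #{w | w ≠ v ∧ (G.neighborSet w \ {v}).ncard = t} := by
  rw [dcount, ← Set.ncard_image_of_injective _ Subtype.val_injective, ← Set.ncard_coe_finset]
  congr 1
  ext w
  simp [gdeg_gcard, and_comm]

lemma ncard_neighborSet_sdiff_singleton_eq_iff [Finite V] {v w : V} {t : ℕ} :
    (G.neighborSet w \ {v}).ncard = t ↔
      G.Adj w v ∧ gdeg G w = t + 1 ∨ ¬G.Adj w v ∧ gdeg G w = t := by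
  by_cases hwv : G.Adj w v
  · have hpos : 0 < gdeg G w := (Set.ncard_pos).mpr ⟨v, hwv⟩
    rw [Set.ncard_sdiff_singleton_of_mem (s := G.neighborSet w) hwv]
    simp only [hwv, true_and, not_true_eq_false, false_and, or_false]
    unfold gdeg at hpos ⊢
    omega
  · rw [Set.sdiff_singleton_eq_self (s := G.neighborSet w) hwv]
    simp [hwv, gdeg]

lemma card_filter_ncard_neighborSet_sdiff_singleton_eq [Fintype V] [DecidableEq V]
    [DecidableRel G.Adj] (w : V) (t : ℕ) :
    #{v | w ≠ v ∧ (G.neighborSet w \ {v}).ncard = t} =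
      (if gdeg G w = t then Fintype.card V - 1 - t else 0) +
        (if gdeg G w = t + 1 then t + 1 else 0) := by
  simp_rw [ncard_neighborSet_sdiff_singleton_eq_iff]
  by_cases hdeg : gdeg G w = t
  · calc _ = #(Gᶜ.neighborFinset w) := by congr 1; ext v; simp [hdeg, compl_adj]
      _ = _ := by
        rw [card_neighborFinset_eq_degree, degree_compl, ← gdeg_eq_degree, hdeg, if_pos rfl,
          if_neg (by omega), add_zero]
  by_cases hdeg' : gdeg G w = t + 1
  · calc _ = #(G.neighborFinset w) := by congr 1; ext v; simpa [hdeg'] using Adj.ne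
      _ = _ := by simp [← gdeg_eq_degree, hdeg']
  simp [hdeg, hdeg']

lemma sum_dcount_gcard [Fintype V] [DecidableEq V] (t : ℕ) :
    ∑ v, dcount (gcard G v) t =
      (Fintype.card V - 1 - t) * dcount G t + (t + 1) * dcount G (t + 1) := by
  classical
  let r : V → V → Prop := fun v w => w ≠ v ∧ (G.neighborSet w \ {v}).ncard = t
  calc ∑ v, dcount (gcard G v) t = ∑ v, #(univ.bipartiteAbove r v) := by
        simp only [dcount_gcard]; rfl
    _ = ∑ w, #(univ.bipartiteBelow r w) := sum_card_bipartiteAbove_eq_sum_card_bipartiteBelow _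
    _ = ∑ w, ((if gdeg G w = t then Fintype.card V - 1 - t else 0) +
          (if gdeg G w = t + 1 then t + 1 else 0)) := by
        simp only [bipartiteBelow, r, card_filter_ncard_neighborSet_sdiff_singleton_eq]
    _ = _ := by simp [sum_add_distrib, ← sum_filter, dcount_eq_card_filter, mul_comm]

end

theorem degree_count_over_deck_general {n t : ℕ} (G : SimpleGraph (Fin n)) :
    ∑ v : Fin n, dcount (gcard G v) t
      = (n - 1 - t) * dcount G t + (t + 1) * dcount G (t + 1) := by
  simpa only [Fintype.card_fin] using sum_dcount_gcard G t

/-- Counting occurrences of degree-`t` vertices over the whole deck: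
`Σ_v d_t(G - v) = (n - 1 - t) d_t(G) + (t + 1) d_{t+1}(G)`. -/
theorem degree_count_over_deck {n t : ℕ} (ht : t ≤ n - 1) (G : SimpleGraph (Fin n)) :
    ∑ v : Fin n, dcount (gcard G v) t
      = (n - 1 - t) * dcount G t + (t + 1) * dcount G (t + 1) :=
  degree_count_over_deck_general G
end

section
/- For every integer p ≥ 2 there exist simple graphs G and H, each on 3p + 4 vertices, such that: G is isomorphic to the disjoint union K_{1,p+1} ⊔ K_{1,p+1} ⊔ K_{1,p−1} and H is isomorphic to the disjoint union K_{1,p+1} ⊔ K_{1,p} ⊔ K_{1,p}; G and H have the same number of edges, e(G) = e(H) = 3p + 1; the degree sequences of G and H are different (G has two vertices of degree p + 1 while H has exactly one); and G and H share at least 2p common cards. -/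
open SimpleGraph

/-- The star `K_{1,q}` with one centre and `q` leaves. -/
def star' (q : ℕ) : SimpleGraph (Fin 1 ⊕ Fin q) := completeBipartiteGraph (Fin 1) (Fin q)

/-!
Deleting a leaf of a star `K_{1,m}` leaves `K_{1,m-1}`. Hence deleting a leaf of either
`K_{1,p+1}` of `G`, or of either `K_{1,p}` of `H`, leaves `K_{1,p+1} ⊔ K_{1,p} ⊔ K_{1,p-1}`
every time, so matching `2p` such leaves of `G` injectively with the `2p` leaves of the two
`K_{1,p}` of `H` gives `2p` common cards. The degree sequences differ in the number of centres
of degree `p + 1`.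
-/

namespace SimpleGraph.Iso

variable {V W : Type} {G : SimpleGraph V} {H : SimpleGraph W}

lemma gdeg_eq (φ : G ≃g H) (v : V) : gdeg H (φ v) = gdeg G v :=
  (Nat.card_congr (φ.mapNeighborSet v)).symm

lemma ecount_eq_s16 (φ : G ≃g H) : ecount H = ecount G :=
  (Nat.card_congr φ.mapEdgeSet).symm

lemma dcount_eq (φ : G ≃g H) (t : ℕ) : dcount H t = dcount G t :=
  (Nat.card_congr (φ.toEquiv.subtypeEquiv fun v => by simp [φ.gdeg_eq])).symm

def gcardCongr (φ : G ≃g H) (v : V) : gcard G v ≃g gcard H (φ v) where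
  toEquiv := φ.toEquiv.subtypeEquiv fun _ => φ.injective.ne_iff.symm
  map_rel_iff' := φ.map_adj_iff

end SimpleGraph.Iso

lemma map_gdeg_ne_of_dcount_ne {V W : Type} [Fintype V] [Fintype W]
    {G : SimpleGraph V} {H : SimpleGraph W} {t : ℕ} (h : dcount G t ≠ dcount H t) :
    (Finset.univ.val.map fun v => gdeg G v) ≠ (Finset.univ.val.map fun w => gdeg H w) := by
  have count_eq {U : Type} [Fintype U] (K : SimpleGraph U) :
      (Finset.univ.val.map fun u => gdeg K u).count t = dcount K t := by
    classical
    rw [Multiset.count_map, dcount, Set.ncard_eq_toFinset_card', Set.toFinset_ofPred]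
    simp only [eq_comm, Finset.card, Finset.filter_val]
  exact fun hGH => h (by rw [← count_eq, hGH, count_eq])

section Sum

variable {V W : Type} (G : SimpleGraph V) (H : SimpleGraph W)

lemma gdeg_sum_inl (v : V) : gdeg (G ⊕g H) (Sum.inl v) = gdeg G v := by
  rw [gdeg, neighborSet_sum_inl, Set.ncard_image_of_injective _ Sum.inl_injective, gdeg]

lemma gdeg_sum_inr (w : W) : gdeg (G ⊕g H) (Sum.inr w) = gdeg H w := by
  rw [gdeg, neighborSet_sum_inr, Set.ncard_image_of_injective _ Sum.inr_injective, gdeg]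

lemma ecount_sum [Finite V] [Finite W] : ecount (G ⊕g H) = ecount G + ecount H :=
  (Nat.card_congr edgeSetSumEquiv).trans Nat.card_sum

lemma dcount_sum [Finite V] [Finite W] (t : ℕ) :
    dcount (G ⊕g H) t = dcount G t + dcount H t := by
  rw [dcount, ← Nat.card_coe_set_eq, Nat.card_congr Equiv.subtypeSum, Nat.card_sum]
  simp only [Set.mem_ofPred_eq, gdeg_sum_inl, gdeg_sum_inr]
  rfl

def gcardSumInl (v : V) : gcard (G ⊕g H) (Sum.inl v) ≃g gcard G v ⊕g H where
  toEquiv := Equiv.subtypeSum.trans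
    ((Equiv.subtypeEquivRight fun _ => Sum.inl_injective.ne_iff).sumCongr
      (Equiv.subtypeUnivEquiv fun _ => Sum.inr_ne_inl))
  map_rel_iff' := by
    rintro ⟨u | u, hu⟩ ⟨w | w, hw⟩ <;> simp [gcard, Equiv.subtypeSum]

def gcardSumInr (w : W) : gcard (G ⊕g H) (Sum.inr w) ≃g G ⊕g gcard H w where
  toEquiv := Equiv.subtypeSum.trans
    ((Equiv.subtypeUnivEquiv fun _ => Sum.inl_ne_inr).sumCongr
      (Equiv.subtypeEquivRight fun _ => Sum.inr_injective.ne_iff))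
  map_rel_iff' := by
    rintro ⟨u | u, hu⟩ ⟨w | w, hw⟩ <;> simp [gcard, Equiv.subtypeSum]

end Sum

section Star

lemma gdeg_star'_inl (q : ℕ) (c : Fin 1) : gdeg (star' q) (Sum.inl c) = q := by
  have : (star' q).neighborSet (Sum.inl c) = Set.range Sum.inr := by
    ext (_ | _) <;> simp [star', completeBipartiteGraph]
  rw [gdeg, this, ← Nat.card_coe_set_eq, Nat.card_range_of_injective Sum.inr_injective,
    Nat.card_eq_fintype_card, Fintype.card_fin]

lemma gdeg_star'_inr (q : ℕ) (j : Fin q) : gdeg (star' q) (Sum.inr j) = 1 := by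
  have : (star' q).neighborSet (Sum.inr j) = Set.range Sum.inl := by
    ext (_ | _) <;> simp [star', completeBipartiteGraph]
  rw [gdeg, this, ← Nat.card_coe_set_eq, Nat.card_range_of_injective Sum.inl_injective,
    Nat.card_eq_fintype_card, Fintype.card_fin]

lemma ecount_star' (q : ℕ) : ecount (star' q) = q := by
  simp [ecount, Set.ncard_def, star', encard_edgeSet_completeBipartiteGraph]

lemma dcount_star'_of_ne_one {q t : ℕ} (ht : t ≠ 1) :
    dcount (star' q) t = if q = t then 1 else 0 := by
  split_ifs with hq
  · rw [dcount]
    convert Set.ncard_singleton (Sum.inl 0 : Fin 1 ⊕ Fin q) using 2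
    ext (_ | _) <;> simp [gdeg_star'_inl, gdeg_star'_inr, hq, Fin.fin_one_eq_zero, Ne.symm ht]
  · rw [dcount]
    convert Set.ncard_empty (Fin 1 ⊕ Fin q) using 2
    ext (_ | _) <;> simp [gdeg_star'_inl, gdeg_star'_inr, hq, Ne.symm ht]

def gcardStar'Inr (q : ℕ) (j : Fin (q + 1)) :
    gcard (star' (q + 1)) (Sum.inr j) ≃g star' q where
  toEquiv := Equiv.subtypeSum.trans
    ((Equiv.subtypeUnivEquiv fun _ => Sum.inl_ne_inr).sumCongr
      ((Equiv.subtypeEquivRight fun _ => Sum.inr_injective.ne_iff).trans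
        (finSuccAboveEquiv j).symm))
  map_rel_iff' := by
    rintro ⟨u | u, hu⟩ ⟨w | w, hw⟩ <;> simp [gcard, star', Equiv.subtypeSum]

end Star

lemma SharesCards.of_iso {n : ℕ} {G H : SimpleGraph (Fin n)} {V W ι : Type} [Fintype ι]
    {G' : SimpleGraph V} {H' : SimpleGraph W} (φ : G ≃g G') (ψ : H ≃g H') {s : ι → V}
    {t : ι → W} (hs : s.Injective) (ht : t.Injective)
    (hst : ∀ i, Nonempty (gcard G' (s i) ≃g gcard H' (t i))) :
    SharesCards G H (Fintype.card ι) := by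
  classical
  have hs' : (φ.symm ∘ s).Injective := φ.symm.injective.comp hs
  refine ⟨Finset.univ.image (φ.symm ∘ s), Function.extend (φ.symm ∘ s) (ψ.symm ∘ t) id,
    (Finset.card_image_of_injective _ hs').ge, ?_, ?_⟩
  · rw [Finset.coe_image, Finset.coe_univ, Set.image_univ]
    rintro _ ⟨i, rfl⟩ _ ⟨j, rfl⟩ hij
    rw [hs'.extend_apply, hs'.extend_apply] at hij
    exact congrArg _ (ht (ψ.symm.injective hij))
  · intro v hv
    obtain ⟨i, -, rfl⟩ := Finset.mem_image.1 hv
    rw [hs'.extend_apply]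
    exact ⟨(φ.symm.gcardCongr (s i)).symm.trans <|
      (hst i).some.trans (ψ.symm.gcardCongr (t i))⟩

lemma sharesCards_star'_unions (q : ℕ) {n : ℕ} {G H : SimpleGraph (Fin n)}
    (φ : G ≃g star' (q + 2) ⊕g star' (q + 2) ⊕g star' q)
    (ψ : H ≃g star' (q + 2) ⊕g star' (q + 1) ⊕g star' (q + 1)) :
    SharesCards G H (2 * (q + 1)) := by
  have h := SharesCards.of_iso φ ψ
    (s := Sum.inl ∘ Sum.map (Sum.inr ∘ Fin.castSucc) (Sum.inr ∘ Fin.castSucc))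
    (t := Sum.map (Sum.inr ∘ Sum.inr) Sum.inr)
    (Sum.inl_injective.comp <| Sum.map_injective.2
      ⟨Sum.inr_injective.comp (Fin.castSucc_injective _),
        Sum.inr_injective.comp (Fin.castSucc_injective _)⟩)
    (Sum.map_injective.2 ⟨Sum.inr_injective.comp Sum.inr_injective, Sum.inr_injective⟩) ?_
  · rwa [Fintype.card_sum, Fintype.card_fin, ← two_mul] at h
  rintro (j | j)
  · exact ⟨((gcardSumInl _ _ _).trans <| Iso.sumCongr ((gcardSumInl _ _ _).trans <|
        Iso.sumCongr (gcardStar'Inr _ _) Iso.refl) Iso.refl).trans <|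
      (Iso.sumAssoc.trans Iso.sumComm).trans <|
      ((gcardSumInl _ _ _).trans <| Iso.sumCongr ((gcardSumInr _ _ _).trans <|
        Iso.sumCongr Iso.refl (gcardStar'Inr _ _)) Iso.refl).symm⟩
  · exact ⟨((gcardSumInl _ _ _).trans <| Iso.sumCongr ((gcardSumInr _ _ _).trans <|
        Iso.sumCongr Iso.refl (gcardStar'Inr _ _)) Iso.refl).trans <|
      ((gcardSumInr _ _ _).trans <| Iso.sumCongr Iso.refl (gcardStar'Inr _ _)).symm⟩

/-- Two graphs on `3p + 4` vertices — disjoint unions of stars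
`K_{1,p+1} ⊔ K_{1,p+1} ⊔ K_{1,p-1}` and `K_{1,p+1} ⊔ K_{1,p} ⊔ K_{1,p}` — with
the same number of edges `3p + 1` and different degree sequences, sharing at
least `2p` common cards. -/
theorem star_unions_share_cards (p : ℕ) (hp : 2 ≤ p) :
    ∃ G H : SimpleGraph (Fin (3 * p + 4)),
      Nonempty (G ≃g (star' (p + 1) ⊕g star' (p + 1) ⊕g star' (p - 1))) ∧
      Nonempty (H ≃g (star' (p + 1) ⊕g star' p ⊕g star' p)) ∧
      ecount G = 3 * p + 1 ∧ ecount H = 3 * p + 1 ∧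
      (Finset.univ.val.map fun v => gdeg G v) ≠
        (Finset.univ.val.map fun v => gdeg H v) ∧
      dcount G (p + 1) = 2 ∧ dcount H (p + 1) = 1 ∧
      SharesCards G H (2 * p) := by
  obtain ⟨q, rfl⟩ : ∃ q, p = q + 1 := ⟨p - 1, by omega⟩
  rw [Nat.add_sub_cancel]
  obtain ⟨G, ⟨φ⟩⟩ : ∃ G : SimpleGraph (Fin (3 * (q + 1) + 4)),
      Nonempty (G ≃g star' (q + 2) ⊕g star' (q + 2) ⊕g star' q) :=
    ⟨_, ⟨(overFinIso _ (by simp; ring)).symm⟩⟩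
  obtain ⟨H, ⟨ψ⟩⟩ : ∃ H : SimpleGraph (Fin (3 * (q + 1) + 4)),
      Nonempty (H ≃g star' (q + 2) ⊕g star' (q + 1) ⊕g star' (q + 1)) :=
    ⟨_, ⟨(overFinIso _ (by simp; ring)).symm⟩⟩
  have hdG : dcount G (q + 2) = 2 := by
    simp [φ.symm.dcount_eq, dcount_sum, dcount_star'_of_ne_one]
  have hdH : dcount H (q + 2) = 1 := by
    simp [ψ.symm.dcount_eq, dcount_sum, dcount_star'_of_ne_one]
  refine ⟨G, H, ⟨φ⟩, ⟨ψ⟩, ?_, ?_, map_gdeg_ne_of_dcount_ne (t := q + 2) (by omega),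
    hdG, hdH, sharesCards_star'_unions q φ ψ⟩
  · rw [φ.symm.ecount_eq_s16, ecount_sum, ecount_sum, ecount_star', ecount_star']
    ring
  · rw [ψ.symm.ecount_eq_s16, ecount_sum, ecount_sum, ecount_star', ecount_star']
    ring
end

section
/- For every integer p ≥ 2 there exist simple graphs G and H, each on 2p + 3 vertices, such that: G is isomorphic to the disjoint union K_{2,p} ⊔ K_{1,p} and H is isomorphic to the disjoint union K_{2,p+1} ⊔ K_{1,p−1}; G and H have different numbers of edges, namely e(G) = 3p and e(H) = 3p + 1; and G and H share at least p common cards. -/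
open SimpleGraph

/-! ### Auxiliary general lemmas about `gcard` and `ecount` -/

/-- Transport a card along a comap by an equiv. -/
def gcardComapIso {V W : Type} (e : V ≃ W) (Gw : SimpleGraph W) (v : V) :
    gcard (Gw.comap e) v ≃g gcard Gw (e v) where
  toEquiv := e.subtypeEquiv (fun _ => not_congr (Equiv.apply_eq_iff_eq e).symm)
  map_rel_iff' := Iff.rfl

/-- Cards at equal vertices are isomorphic. -/
def gcardCongr {V : Type} (G : SimpleGraph V) {v v' : V} (h : v = v') :
    gcard G v ≃g gcard G v' := by subst h; exact ⟨Equiv.refl _, Iff.rfl⟩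

/-- A permutation matching adjacency away from `v` gives isomorphic cards. -/
def gcardPermIso {V : Type} (G H : SimpleGraph V) (σ : Equiv.Perm V) (v : V)
    (h : ∀ x y, x ≠ v → y ≠ v → (G.Adj x y ↔ H.Adj (σ x) (σ y))) :
    gcard G v ≃g gcard H (σ v) where
  toEquiv := σ.subtypeEquiv (fun _ => not_congr (Equiv.apply_eq_iff_eq σ).symm)
  map_rel_iff' := fun {x y} => (h x.1 y.1 x.2 y.2).symm

/-- Isomorphic graphs have the same number of edges. -/
lemma ecount_eq_of_iso {V V' : Type} {G : SimpleGraph V} {G' : SimpleGraph V'}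
    (e : G ≃g G') : ecount G = ecount G' := by
  rw [ecount, ecount, ← Nat.card_coe_set_eq, ← Nat.card_coe_set_eq]
  exact Nat.card_congr e.mapEdgeSet

namespace CardsAux

variable {p : ℕ}

/-- The vertex type: two bipartite centres, one star centre, `p` bipartite
vertices, `p - 1` ordinary leaves, and one special vertex. -/
abbrev W (p : ℕ) : Type := Fin 2 ⊕ (Fin 1 ⊕ (Fin p ⊕ (Fin (p-1) ⊕ Fin 1)))

def A (i : Fin 2) : W p := Sum.inl i
def C : W p := Sum.inr (Sum.inl 0)
def B (j : Fin p) : W p := Sum.inr (Sum.inr (Sum.inl j))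
def D (j : Fin (p-1)) : W p := Sum.inr (Sum.inr (Sum.inr (Sum.inl j)))
def E : W p := Sum.inr (Sum.inr (Sum.inr (Sum.inr 0)))

def rG (x y : W p) : Prop :=
  (∃ i j, x = A i ∧ y = B j) ∨ (∃ j, x = C ∧ y = D j) ∨ (x = C ∧ y = E)

def rH (x y : W p) : Prop :=
  (∃ i j, x = A i ∧ y = B j) ∨ (∃ i, x = A i ∧ y = E) ∨ (∃ j, x = C ∧ y = D j)

/-- `K_{2,p} ⊔ K_{1,p}`: the `a`'s joined to the `b`'s, the centre `c` joined
to the leaves `d` and to `e`. -/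
def G1 (p : ℕ) : SimpleGraph (W p) := SimpleGraph.fromRel rG

/-- `K_{2,p+1} ⊔ K_{1,p-1}`: the `a`'s joined to the `b`'s and to `e`, the
centre `c` joined to the leaves `d`. -/
def H1 (p : ℕ) : SimpleGraph (W p) := SimpleGraph.fromRel rH

/-- The 3-cycle sending `D j ↦ B j'`, `B j' ↦ E`, `E ↦ D j`. -/
def cyc (hp : 2 ≤ p) (j : Fin (p-1)) : Equiv.Perm (W p) :=
  (Equiv.swap (D j) (B (Fin.castLE (by omega) j))).trans (Equiv.swap (D j) E)

lemma cyc_A (hp : 2 ≤ p) (j : Fin (p-1)) (i : Fin 2) : cyc hp j (A i) = A i := by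
  simp [cyc, Equiv.swap_apply_def, A, B, C, D, E]
lemma cyc_C (hp : 2 ≤ p) (j : Fin (p-1)) : cyc hp j (C : W p) = C := by
  simp [cyc, Equiv.swap_apply_def, A, B, C, D, E]
lemma cyc_E (hp : 2 ≤ p) (j : Fin (p-1)) : cyc hp j (E : W p) = D j := by
  simp [cyc, Equiv.swap_apply_def, A, B, C, D, E]
lemma cyc_D (hp : 2 ≤ p) (j l : Fin (p-1)) :
    cyc hp j (D l) = if l = j then B (Fin.castLE (by omega) j) else D l := by
  by_cases h : l = j <;> simp [cyc, Equiv.swap_apply_def, A, B, C, D, E, h]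
lemma cyc_B (hp : 2 ≤ p) (j : Fin (p-1)) (l : Fin p) :
    cyc hp j (B l) = if l = Fin.castLE (by omega) j then E else B l := by
  by_cases h : l = Fin.castLE (by omega) j <;>
    simp [cyc, Equiv.swap_apply_def, A, B, C, D, E, h]

lemma cases_W : ∀ x : W p, (∃ i : Fin 2, x = A i) ∨ (x = C) ∨ (∃ l, x = B l) ∨
    (∃ l, x = D l) ∨ x = E := by
  rintro (i | (c | (l | (l | u))))
  · exact Or.inl ⟨i, rfl⟩
  · exact Or.inr (Or.inl (by simp [C, Fin.fin_one_eq_zero c]))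
  · exact Or.inr (Or.inr (Or.inl ⟨l, rfl⟩))
  · exact Or.inr (Or.inr (Or.inr (Or.inl ⟨l, rfl⟩)))
  · exact Or.inr (Or.inr (Or.inr (Or.inr (by simp [E, Fin.fin_one_eq_zero u]))))

set_option maxHeartbeats 1000000 in
/-- Removing the leaf `D j` from `G1` and the vertex `B j'` from `H1` leaves
isomorphic graphs, as witnessed by the permutation `cyc`. -/
lemma key (hp : 2 ≤ p) (j : Fin (p-1)) :
    ∀ x y : W p, x ≠ D j → y ≠ D j →
      ((G1 p).Adj x y ↔ (H1 p).Adj (cyc hp j x) (cyc hp j y)) := by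
  intro x y hx hy
  rcases cases_W x with ⟨i, rfl⟩ | rfl | ⟨l, rfl⟩ | ⟨l, rfl⟩ | rfl <;>
    rcases cases_W y with ⟨i', rfl⟩ | rfl | ⟨l', rfl⟩ | ⟨l', rfl⟩ | rfl <;>
      simp only [G1, H1, fromRel_adj, rG, rH, cyc_A, cyc_B, cyc_C, cyc_D, cyc_E] <;>
      (try split_ifs) <;>
      (try (simp_all [A, B, C, D, E, Fin.ext_iff])) <;>
      (try exact ⟨Fin.castLE (by omega) j, rfl⟩)

set_option maxHeartbeats 1000000 in
/-- Removing the special vertex `E` from `G1` and from `H1` leaves equal graphs. -/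
lemma keyE (hp : 2 ≤ p) :
    ∀ x y : W p, x ≠ E → y ≠ E →
      ((G1 p).Adj x y ↔ (H1 p).Adj ((Equiv.refl (W p)) x) ((Equiv.refl (W p)) y)) := by
  intro x y hx hy
  rcases cases_W x with ⟨i, rfl⟩ | rfl | ⟨l, rfl⟩ | ⟨l, rfl⟩ | rfl <;>
    rcases cases_W y with ⟨i', rfl⟩ | rfl | ⟨l', rfl⟩ | ⟨l', rfl⟩ | rfl <;>
      simp only [G1, H1, fromRel_adj, rG, rH, Equiv.refl_apply] <;>
      (try (simp_all [A, B, C, D, E, Fin.ext_iff]))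

def eG (hp : 2 ≤ p) : W p ≃ (Fin 2 ⊕ Fin p) ⊕ (Fin 1 ⊕ Fin p) where
  toFun x := match x with
    | .inl i => .inl (.inl i)
    | .inr (.inl c) => .inr (.inl c)
    | .inr (.inr (.inl j)) => .inl (.inr j)
    | .inr (.inr (.inr (.inl j))) => .inr (.inr (Fin.castLE (by omega) j))
    | .inr (.inr (.inr (.inr _))) => .inr (.inr ⟨p-1, by omega⟩)
  invFun y := match y with
    | .inl (.inl i) => .inl i
    | .inl (.inr j) => .inr (.inr (.inl j))
    | .inr (.inl c) => .inr (.inl c)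
    | .inr (.inr j) => if h : (j : ℕ) < p - 1
        then .inr (.inr (.inr (.inl ⟨j, h⟩)))
        else .inr (.inr (.inr (.inr 0)))
  left_inv x := by
    rcases x with i | (c | (j | (j | u)))
    · rfl
    · rfl
    · rfl
    · simp [j.2]
    · simp [Fin.fin_one_eq_zero u]
  right_inv y := by
    rcases y with (i | j) | (c | j)
    · rfl
    · rfl
    · rfl
    · dsimp only
      split_ifs with h
      · rfl
      · simp only
        congr 2
        have h2 := j.2
        exact Fin.ext (show p - 1 = (j : ℕ) by omega)

def isoG (hp : 2 ≤ p) :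
    G1 p ≃g (completeBipartiteGraph (Fin 2) (Fin p) ⊕g
      completeBipartiteGraph (Fin 1) (Fin p)) where
  toEquiv := eG hp
  map_rel_iff' := by
    intro x y
    rcases x with i | (c | (l | (l | u))) <;> rcases y with i' | (c' | (l' | (l' | u'))) <;>
      simp_all [G1, fromRel_adj, rG, eG, A, B, C, D, E, completeBipartiteGraph,
        Fin.fin_one_eq_zero, Fin.ext_iff]

def eH (hp : 2 ≤ p) : W p ≃ (Fin 2 ⊕ Fin (p+1)) ⊕ (Fin 1 ⊕ Fin (p-1)) where
  toFun x := match x with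
    | .inl i => .inl (.inl i)
    | .inr (.inl c) => .inr (.inl c)
    | .inr (.inr (.inl j)) => .inl (.inr (Fin.castSucc j))
    | .inr (.inr (.inr (.inl j))) => .inr (.inr j)
    | .inr (.inr (.inr (.inr _))) => .inl (.inr (Fin.last p))
  invFun y := match y with
    | .inl (.inl i) => .inl i
    | .inl (.inr j) => if h : (j : ℕ) < p
        then .inr (.inr (.inl ⟨j, h⟩))
        else .inr (.inr (.inr (.inr 0)))
    | .inr (.inl c) => .inr (.inl c)
    | .inr (.inr j) => .inr (.inr (.inr (.inl j)))
  left_inv x := by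
    rcases x with i | (c | (j | (j | u)))
    · rfl
    · rfl
    · simp [j.2]
    · rfl
    · simp [Fin.fin_one_eq_zero u]
  right_inv y := by
    rcases y with (i | j) | (c | j)
    · rfl
    · dsimp only
      split_ifs with h
      · simp
      · simp only
        congr 2
        have h2 := j.2
        exact Fin.ext (show (p : ℕ) = (j : ℕ) by omega)
    · rfl
    · rfl

def isoH (hp : 2 ≤ p) :
    H1 p ≃g (completeBipartiteGraph (Fin 2) (Fin (p+1)) ⊕g
      completeBipartiteGraph (Fin 1) (Fin (p-1))) where
  toEquiv := eH hp
  map_rel_iff' := by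
    intro x y
    rcases x with i | (c | (l | (l | u))) <;> rcases y with i' | (c' | (l' | (l' | u'))) <;>
      simp_all [H1, fromRel_adj, rH, eH, A, B, C, D, E, completeBipartiteGraph,
        Fin.fin_one_eq_zero, Fin.ext_iff]

def fG (hp : 2 ≤ p) : (Fin 2 × Fin p) ⊕ (Fin (p-1) ⊕ Fin 1) → (G1 p).edgeSet
  | .inl (i, j) => ⟨s(A i, B j), by simp [G1, fromRel_adj, rG, A, B, C, D, E]⟩
  | .inr (.inl j) => ⟨s(C, D j), by simp [G1, fromRel_adj, rG, A, B, C, D, E]⟩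
  | .inr (.inr _) => ⟨s(C, E), by simp [G1, fromRel_adj, rG, A, B, C, D, E]⟩

lemma fG_bij (hp : 2 ≤ p) : Function.Bijective (fG hp) := by
  constructor
  · rintro (⟨i, j⟩ | (j | u)) (⟨i', j'⟩ | (j' | u')) h <;>
      simp_all [fG, Sym2.eq_iff, A, B, C, D, E, Fin.fin_one_eq_zero]
  · rintro ⟨e, he⟩
    induction e using Sym2.ind with
    | _ x y =>
      rw [mem_edgeSet, G1, fromRel_adj] at he
      obtain ⟨hne, hr | hr⟩ := he
      · rcases hr with ⟨i, j, rfl, rfl⟩ | ⟨j, rfl, rfl⟩ | ⟨rfl, rfl⟩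
        · exact ⟨.inl (i, j), rfl⟩
        · exact ⟨.inr (.inl j), rfl⟩
        · exact ⟨.inr (.inr 0), rfl⟩
      · rcases hr with ⟨i, j, rfl, rfl⟩ | ⟨j, rfl, rfl⟩ | ⟨rfl, rfl⟩
        · exact ⟨.inl (i, j), Subtype.ext (Sym2.eq_swap)⟩
        · exact ⟨.inr (.inl j), Subtype.ext (Sym2.eq_swap)⟩
        · exact ⟨.inr (.inr 0), Subtype.ext (Sym2.eq_swap)⟩

lemma ecount_G1 (hp : 2 ≤ p) : ecount (G1 p) = 3 * p := by
  have h1 : Nat.card ((Fin 2 × Fin p) ⊕ (Fin (p-1) ⊕ Fin 1)) = Nat.card (G1 p).edgeSet :=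
    Nat.card_eq_of_bijective _ (fG_bij hp)
  rw [ecount, ← Nat.card_coe_set_eq, ← h1]
  simp [Nat.card_eq_fintype_card]
  omega

def fH (hp : 2 ≤ p) : (Fin 2 × Fin p) ⊕ (Fin 2 ⊕ Fin (p-1)) → (H1 p).edgeSet
  | .inl (i, j) => ⟨s(A i, B j), by simp [H1, fromRel_adj, rH, A, B, C, D, E]⟩
  | .inr (.inl i) => ⟨s(A i, E), by simp [H1, fromRel_adj, rH, A, B, C, D, E]⟩
  | .inr (.inr j) => ⟨s(C, D j), by simp [H1, fromRel_adj, rH, A, B, C, D, E]⟩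

lemma fH_bij (hp : 2 ≤ p) : Function.Bijective (fH hp) := by
  constructor
  · rintro (⟨i, j⟩ | (i | j)) (⟨i', j'⟩ | (i' | j')) h <;>
      simp_all [fH, Sym2.eq_iff, A, B, C, D, E]
  · rintro ⟨e, he⟩
    induction e using Sym2.ind with
    | _ x y =>
      rw [mem_edgeSet, H1, fromRel_adj] at he
      obtain ⟨hne, hr | hr⟩ := he
      · rcases hr with ⟨i, j, rfl, rfl⟩ | ⟨i, rfl, rfl⟩ | ⟨j, rfl, rfl⟩
        · exact ⟨.inl (i, j), rfl⟩
        · exact ⟨.inr (.inl i), rfl⟩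
        · exact ⟨.inr (.inr j), rfl⟩
      · rcases hr with ⟨i, j, rfl, rfl⟩ | ⟨i, rfl, rfl⟩ | ⟨j, rfl, rfl⟩
        · exact ⟨.inl (i, j), Subtype.ext (Sym2.eq_swap)⟩
        · exact ⟨.inr (.inl i), Subtype.ext (Sym2.eq_swap)⟩
        · exact ⟨.inr (.inr j), Subtype.ext (Sym2.eq_swap)⟩

lemma ecount_H1 (hp : 2 ≤ p) : ecount (H1 p) = 3 * p + 1 := by
  have h1 : Nat.card ((Fin 2 × Fin p) ⊕ (Fin 2 ⊕ Fin (p-1))) = Nat.card (H1 p).edgeSet :=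
    Nat.card_eq_of_bijective _ (fH_bij hp)
  rw [ecount, ← Nat.card_coe_set_eq, ← h1]
  simp [Nat.card_eq_fintype_card]
  omega

/-- The equiv between `Fin (2p+3)` and the structured vertex type. -/
noncomputable def ee (hp : 2 ≤ p) : Fin (2 * p + 3) ≃ W p := by
  apply (Fintype.equivFinOfCardEq _).symm
  simp only [Fintype.card_sum, Fintype.card_fin]
  omega

/-- The removable vertices of `G1`: the `p - 1` leaves together with `E`. -/
def dvtx (hp : 2 ≤ p) (k : Fin p) : W p :=
  if h : (k : ℕ) < p - 1 then D ⟨k, h⟩ else E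

/-- Where the removable vertices are matched in `H1`. -/
def tvtx (hp : 2 ≤ p) (k : Fin p) : W p :=
  if h : (k : ℕ) < p - 1 then B (Fin.castLE (Nat.sub_le p 1) ⟨k, h⟩) else E

lemma dvtx_inj (hp : 2 ≤ p) : Function.Injective (dvtx hp) := by
  intro k k' h
  unfold dvtx at h
  split_ifs at h <;> simp_all [D, E, Fin.ext_iff] <;> omega

lemma tvtx_inj (hp : 2 ≤ p) : Function.Injective (tvtx hp) := by
  intro k k' h
  unfold tvtx at h
  split_ifs at h <;> simp_all [B, E, Fin.ext_iff] <;> omega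

/-- The replacement map on vertices: leaves of `G1` go to bipartite vertices
of `H1`. -/
def tau : W p → W p
  | .inr (.inr (.inr (.inl j))) => B (Fin.castLE (Nat.sub_le p 1) j)
  | x => x

lemma tau_dvtx (hp : 2 ≤ p) (k : Fin p) : tau (dvtx hp k) = tvtx hp k := by
  unfold dvtx tvtx
  split_ifs with h
  · rfl
  · rfl

end CardsAux

open CardsAux in
/-- Two graphs on `2p + 3` vertices — the disjoint unions `K_{2,p} ⊔ K_{1,p}`
and `K_{2,p+1} ⊔ K_{1,p-1}` — with different numbers of edges (`3p` and
`3p + 1` respectively), sharing at least `p` common cards. -/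
theorem bipartite_unions_share_cards (p : ℕ) (hp : 2 ≤ p) :
    ∃ G H : SimpleGraph (Fin (2 * p + 3)),
      Nonempty (G ≃g (completeBipartiteGraph (Fin 2) (Fin p) ⊕g
        completeBipartiteGraph (Fin 1) (Fin p))) ∧
      Nonempty (H ≃g (completeBipartiteGraph (Fin 2) (Fin (p + 1)) ⊕g
        completeBipartiteGraph (Fin 1) (Fin (p - 1)))) ∧
      ecount G = 3 * p ∧ ecount H = 3 * p + 1 ∧
      SharesCards G H p := by
  set e := ee hp with he
  refine ⟨(G1 p).comap e, (H1 p).comap e, ?_, ?_, ?_, ?_, ?_⟩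
  · exact ⟨(⟨e, Iff.rfl⟩ : (G1 p).comap e ≃g G1 p).trans (isoG hp)⟩
  · exact ⟨(⟨e, Iff.rfl⟩ : (H1 p).comap e ≃g H1 p).trans (isoH hp)⟩
  · rw [ecount_eq_of_iso (⟨e, Iff.rfl⟩ : (G1 p).comap e ≃g G1 p)]
    exact ecount_G1 hp
  · rw [ecount_eq_of_iso (⟨e, Iff.rfl⟩ : (H1 p).comap e ≃g H1 p)]
    exact ecount_H1 hp
  · refine ⟨Finset.univ.image (fun k : Fin p => e.symm (dvtx hp k)),
      fun v => e.symm (tau (e v)), ?_, ?_, ?_⟩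
    · rw [Finset.card_image_of_injective _
        (show Function.Injective (fun k : Fin p => e.symm (dvtx hp k)) from
          fun a b hab => dvtx_inj hp (e.symm.injective hab))]
      simp
    · intro v hv w hw hvw
      simp only [Finset.coe_image, Set.mem_image] at hv hw
      obtain ⟨k, -, rfl⟩ := hv
      obtain ⟨k', -, rfl⟩ := hw
      simp only [Equiv.apply_symm_apply, tau_dvtx] at hvw
      exact congrArg _ (congrArg _ (tvtx_inj hp (e.symm.injective hvw)))
    · intro v hv
      simp only [Finset.mem_image, Finset.mem_univ, true_and] at hv
      obtain ⟨k, rfl⟩ := hv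
      have hev : e (e.symm (dvtx hp k)) = dvtx hp k := e.apply_symm_apply _
      by_cases h : (k : ℕ) < p - 1
      · -- a leaf `D j`
        set j : Fin (p-1) := ⟨k, h⟩ with hj
        have hd : dvtx hp k = D j := dif_pos h
        have hi1 := gcardComapIso e (G1 p) (e.symm (dvtx hp k))
        have hi2 := gcardCongr (G1 p) (hev.trans hd)
        have hi3 := gcardPermIso (G1 p) (H1 p) (cyc hp j) (D j) (key hp j)
        have hσ : cyc hp j (D j) = B (Fin.castLE (by omega) j) := by
          rw [cyc_D]; simp
        have hfv : e (e.symm (tau (e (e.symm (dvtx hp k))))) = cyc hp j (D j) := by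
          rw [hev, tau_dvtx, e.apply_symm_apply, hσ]
          unfold tvtx
          rw [dif_pos h]
        have hi4 := gcardCongr (H1 p) hfv.symm
        have hi5 := (gcardComapIso e (H1 p) (e.symm (tau (e (e.symm (dvtx hp k)))))).symm
        exact ⟨(((hi1.trans hi2).trans hi3).trans hi4).trans hi5⟩
      · -- the special vertex `E`
        have hd : dvtx hp k = E := dif_neg h
        have hi1 := gcardComapIso e (G1 p) (e.symm (dvtx hp k))
        have hi2 := gcardCongr (G1 p) (hev.trans hd)
        have hi3 := gcardPermIso (G1 p) (H1 p) (Equiv.refl (W p)) E (keyE hp)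
        have hfv : e (e.symm (tau (e (e.symm (dvtx hp k))))) = (Equiv.refl (W p)) E := by
          rw [hev, hd, e.apply_symm_apply]
          rfl
        have hi4 := gcardCongr (H1 p) hfv.symm
        have hi5 := (gcardComapIso e (H1 p) (e.symm (tau (e (e.symm (dvtx hp k)))))).symm
        exact ⟨(((hi1.trans hi2).trans hi3).trans hi4).trans hi5⟩
end
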